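/- arXiv:2603.26428 — 7 statements merged into one kernel-verified Lean document; each statement's English description precedes it below -/
import Mathlib

section
/- Let X and Y be nonempty metric spaces, R a correspondence between X and Y, and for ε > 0 let R_ε = U_ε(R) be the open ε-neighborhood of R in the product metric space X × Y (with, e.g., the max product metric). Then dis R = inf_{ε>0} dis R_ε. -/
open Metric Set
open scoped ENNReal

/-- Distortion of a relation `σ ⊆ X × Y`, valued in `[0,∞]`. -/
noncomputable def dis {X Y : Type*} [MetricSpace X] [MetricSpace Y]
    (σ : Set (X × Y)) : ℝ≥0∞ :=
  ⨆ (p ∈ σ) (q ∈ σ), ENNReal.ofReal |dist p.1 q.1 - dist p.2 q.2|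

/-- A correspondence is a relation whose projections to both factors are surjective. -/
def IsCorrespondence {X Y : Type*} (R : Set (X × Y)) : Prop :=
  (∀ x, ∃ y, (x, y) ∈ R) ∧ (∀ y, ∃ x, (x, y) ∈ R)

/-- The set-valued map `X ⇉ Y` determined by a relation `R ⊆ X × Y`. -/
def corrMap {X Y : Type*} (R : Set (X × Y)) : X → Set Y := fun x => {y | (x, y) ∈ R}

/-- The inverse set-valued map `Y ⇉ X` determined by a relation `R ⊆ X × Y`. -/
def corrInv {X Y : Type*} (R : Set (X × Y)) : Y → Set X := fun y => {x | (x, y) ∈ R}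

/-- Upper semicontinuity of a set-valued map. -/
def SVUpperSemicontinuous {X Y : Type*} [TopologicalSpace X] [TopologicalSpace Y]
    (f : X → Set Y) : Prop :=
  ∀ x : X, ∀ U : Set Y, IsOpen U → f x ⊆ U →
    ∃ V : Set X, IsOpen V ∧ x ∈ V ∧ ∀ x' ∈ V, f x' ⊆ U

/-- Lower semicontinuity of a set-valued map. -/
def SVLowerSemicontinuous {X Y : Type*} [TopologicalSpace X] [TopologicalSpace Y]
    (f : X → Set Y) : Prop :=
  ∀ x : X, ∀ U : Set Y, IsOpen U → (f x ∩ U).Nonempty →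
    ∃ V : Set X, IsOpen V ∧ x ∈ V ∧ ∀ x' ∈ V, (f x' ∩ U).Nonempty

/-- The Gromov–Hausdorff distance defined via distortion of correspondences. -/
noncomputable def dGH (X Y : Type*) [MetricSpace X] [MetricSpace Y] : ℝ≥0∞ :=
  2⁻¹ * ⨅ (R : Set (X × Y)) (_ : IsCorrespondence R), dis R

/-- The upper semicontinuous Gromov–Hausdorff distance. -/
noncomputable def dGHus (X Y : Type*) [MetricSpace X] [MetricSpace Y] : ℝ≥0∞ :=
  2⁻¹ * ⨅ (R : Set (X × Y))
    (_ : IsCorrespondence R ∧ SVUpperSemicontinuous (corrMap R) ∧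
      SVUpperSemicontinuous (corrInv R)), dis R

/-- The lower semicontinuous Gromov–Hausdorff distance. -/
noncomputable def dGHls (X Y : Type*) [MetricSpace X] [MetricSpace Y] : ℝ≥0∞ :=
  2⁻¹ * ⨅ (R : Set (X × Y))
    (_ : IsCorrespondence R ∧ SVLowerSemicontinuous (corrMap R) ∧
      SVLowerSemicontinuous (corrInv R)), dis R

/-! Every point of the `ε`-thickening of `R` lies within `ε` of `R` in both coordinates, so each
term `|d(x, x') - d(y, y')|` over the thickening is within `4ε` of one over `R`. Hence
`dis R ≤ dis (U_ε R) ≤ dis R + 4ε`, and `ε → 0` gives the equality. -/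

section

variable {X Y : Type*} [MetricSpace X] [MetricSpace Y]

lemma ofReal_abs_dist_sub_dist_le_dis {σ : Set (X × Y)} {p q : X × Y} (hp : p ∈ σ) (hq : q ∈ σ) :
    ENNReal.ofReal |dist p.1 q.1 - dist p.2 q.2| ≤ dis σ :=
  le_iSup₂_of_le p hp (le_iSup₂_of_le q hq le_rfl)

lemma dis_mono {σ τ : Set (X × Y)} (h : σ ⊆ τ) : dis σ ≤ dis τ :=
  iSup₂_le fun _ hp => iSup₂_le fun _ hq => ofReal_abs_dist_sub_dist_le_dis (h hp) (h hq)

lemma abs_dist_sub_dist_le (p q p' q' : X × Y) :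
    |dist p.1 q.1 - dist p.2 q.2| ≤
      |dist p'.1 q'.1 - dist p'.2 q'.2| + 2 * (dist p p' + dist q q') := by
  have fst_le (a b : X × Y) : dist a.1 b.1 ≤ dist a b :=
    (le_max_left _ _).trans_eq Prod.dist_eq.symm
  have snd_le (a b : X × Y) : dist a.2 b.2 ≤ dist a b :=
    (le_max_right _ _).trans_eq Prod.dist_eq.symm
  have h₁ : |dist p.1 q.1 - dist p'.1 q'.1| ≤ dist p p' + dist q q' :=
    (dist_dist_dist_le _ _ _ _).trans (add_le_add (fst_le p p') (fst_le q q'))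
  have h₂ : |dist p.2 q.2 - dist p'.2 q'.2| ≤ dist p p' + dist q q' :=
    (dist_dist_dist_le _ _ _ _).trans (add_le_add (snd_le p p') (snd_le q q'))
  rw [abs_le] at h₁ h₂ ⊢
  rcases abs_cases (dist p'.1 q'.1 - dist p'.2 q'.2) with ⟨h, _⟩ | ⟨h, _⟩ <;>
    constructor <;> linarith

lemma dis_thickening_le (R : Set (X × Y)) (δ : ℝ) :
    dis (thickening δ R) ≤ dis R + ENNReal.ofReal (4 * δ) := by
  refine iSup₂_le fun p hp => iSup₂_le fun q hq => ?_
  obtain ⟨p', hp', hpp'⟩ := mem_thickening_iff.mp hp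
  obtain ⟨q', hq', hqq'⟩ := mem_thickening_iff.mp hq
  calc ENNReal.ofReal |dist p.1 q.1 - dist p.2 q.2|
      ≤ ENNReal.ofReal (|dist p'.1 q'.1 - dist p'.2 q'.2| + 4 * δ) := by
        refine ENNReal.ofReal_le_ofReal ((abs_dist_sub_dist_le p q p' q').trans ?_)
        linarith
    _ ≤ ENNReal.ofReal |dist p'.1 q'.1 - dist p'.2 q'.2| + ENNReal.ofReal (4 * δ) :=
        ENNReal.ofReal_add_le
    _ ≤ dis R + ENNReal.ofReal (4 * δ) :=
        add_le_add_left (ofReal_abs_dist_sub_dist_le_dis hp' hq') _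

end

theorem stmt_4_general {X Y : Type*} [MetricSpace X] [MetricSpace Y]
    (R : Set (X × Y)) :
    dis R = ⨅ (ε : ℝ) (_ : 0 < ε), dis {p : X × Y | ∃ q ∈ R, dist p q < ε} := by
  have hU : ∀ ε, {p : X × Y | ∃ q ∈ R, dist p q < ε} = thickening ε R := fun ε => by
    ext; exact mem_thickening_iff.symm
  simp only [hU]
  refine le_antisymm (le_iInf₂ fun ε hε => dis_mono (self_subset_thickening hε R)) ?_
  refine ENNReal.le_of_forall_pos_le_add fun ε hε _ => ?_
  calc ⨅ (δ : ℝ) (_ : 0 < δ), dis (thickening δ R)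
      ≤ dis (thickening (ε / 4) R) := iInf₂_le _ (by positivity)
    _ ≤ dis R + ENNReal.ofReal (4 * (ε / 4)) := dis_thickening_le R _
    _ = dis R + ε := by rw [mul_div_cancel₀ _ four_ne_zero, ENNReal.ofReal_coe_nnreal]

theorem stmt_4 {X Y : Type*} [MetricSpace X] [MetricSpace Y] [Nonempty X] [Nonempty Y]
    (R : Set (X × Y)) (hR : IsCorrespondence R) :
    dis R = ⨅ (ε : ℝ) (_ : 0 < ε), dis {p : X × Y | ∃ q ∈ R, dist p q < ε} :=
  stmt_4_general R
end

section
/- For any nonempty metric spaces X, Y, Z, the upper semicontinuous Gromov–Hausdorff distance satisfies the triangle inequality: d^{us}_GH(X,Z) ≤ d^{us}_GH(X,Y) + d^{us}_GH(Y,Z). -/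
open Metric Set
open scoped ENNReal

/-!
The composite `R₁ ○ R₂` of admissible correspondences `R₁ ⊆ X × Y` and `R₂ ⊆ Y × Z` is again
admissible, and by the triangle inequality through intermediate points of `Y` its distortion is at
most `dis R₁ + dis R₂`. Admissibility survives composition because upper semicontinuity of `f`
means that the upper inverse `{x | f x ⊆ U}` of every open `U` is open, and the upper inverse of
`U` under `x ↦ ⋃ y ∈ f x, g y` is the upper inverse under `f` of that under `g`.
-/

open SetRel

theorem svUpperSemicontinuous_iff_isOpen {A B : Type*} [TopologicalSpace A] [TopologicalSpace B]
    {f : A → Set B} :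
    SVUpperSemicontinuous f ↔ ∀ U : Set B, IsOpen U → IsOpen {a | f a ⊆ U} := by
  refine ⟨fun hf U hU => isOpen_iff_forall_mem_open.2 fun a ha => ?_,
    fun hf a U hU ha => ⟨_, hf U hU, ha, fun _ => id⟩⟩
  obtain ⟨V, hV, haV, hVU⟩ := hf a U hU ha
  exact ⟨V, hVU, hV, haV⟩

theorem SVUpperSemicontinuous.biUnion {A B C : Type*} [TopologicalSpace A] [TopologicalSpace B]
    [TopologicalSpace C] {f : A → Set B} {g : B → Set C}
    (hf : SVUpperSemicontinuous f) (hg : SVUpperSemicontinuous g) :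
    SVUpperSemicontinuous fun a => ⋃ b ∈ f a, g b := by
  rw [svUpperSemicontinuous_iff_isOpen] at hf hg ⊢
  intro U hU
  simp only [iUnion₂_subset_iff]
  exact hf _ (hg U hU)

theorem corrMap_comp {X Y Z : Type*} (R₁ : SetRel X Y) (R₂ : SetRel Y Z) :
    corrMap (R₁ ○ R₂) = fun x => ⋃ y ∈ corrMap R₁ x, corrMap R₂ y := by
  ext x z
  simp [corrMap]

theorem corrInv_comp {X Y Z : Type*} (R₁ : SetRel X Y) (R₂ : SetRel Y Z) :
    corrInv (R₁ ○ R₂) = fun z => ⋃ y ∈ corrInv R₂ z, corrInv R₁ y := by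
  ext z x
  simp [corrInv, and_comm]

theorem IsCorrespondence.comp {X Y Z : Type*} {R₁ : SetRel X Y} {R₂ : SetRel Y Z}
    (h₁ : IsCorrespondence R₁) (h₂ : IsCorrespondence R₂) : IsCorrespondence (R₁ ○ R₂) := by
  refine ⟨fun x => ?_, fun z => ?_⟩
  · obtain ⟨y, hxy⟩ := h₁.1 x
    obtain ⟨z, hyz⟩ := h₂.1 y
    exact ⟨z, prodMk_mem_comp hxy hyz⟩
  · obtain ⟨y, hyz⟩ := h₂.2 z
    obtain ⟨x, hxy⟩ := h₁.2 y
    exact ⟨x, prodMk_mem_comp hxy hyz⟩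

theorem dis_comp_le {X Y Z : Type*} [MetricSpace X] [MetricSpace Y] [MetricSpace Z]
    (R₁ : SetRel X Y) (R₂ : SetRel Y Z) : dis (R₁ ○ R₂) ≤ dis R₁ + dis R₂ := by
  refine iSup₂_le fun p ⟨y, hp₁, hp₂⟩ => iSup₂_le fun q ⟨y', hq₁, hq₂⟩ => ?_
  calc ENNReal.ofReal |dist p.1 q.1 - dist p.2 q.2|
      ≤ ENNReal.ofReal (|dist p.1 q.1 - dist y y'| + |dist y y' - dist p.2 q.2|) :=
        ENNReal.ofReal_le_ofReal (abs_sub_le _ _ _)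
    _ ≤ ENNReal.ofReal |dist p.1 q.1 - dist y y'| + ENNReal.ofReal |dist y y' - dist p.2 q.2| :=
        ENNReal.ofReal_add_le
    _ ≤ dis R₁ + dis R₂ := by
        gcongr
        · exact le_iSup₂_of_le (p.1, y) hp₁ (le_iSup₂_of_le (q.1, y') hq₁ le_rfl)
        · exact le_iSup₂_of_le (y, p.2) hp₂ (le_iSup₂_of_le (y', q.2) hq₂ le_rfl)

theorem stmt_8_general {X Y Z : Type*} [MetricSpace X] [MetricSpace Y] [MetricSpace Z] :
    dGHus X Z ≤ dGHus X Y + dGHus Y Z := by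
  rw [dGHus, dGHus, dGHus, ← mul_add]
  gcongr
  refine ENNReal.le_iInf₂_add_iInf₂ fun R₁ ⟨hR₁, hR₁map, hR₁inv⟩ R₂ ⟨hR₂, hR₂map, hR₂inv⟩ => ?_
  refine iInf₂_le_of_le (R₁ ○ R₂) ⟨hR₁.comp hR₂, ?_, ?_⟩ (dis_comp_le R₁ R₂)
  · rw [corrMap_comp]
    exact hR₁map.biUnion hR₂map
  · rw [corrInv_comp]
    exact hR₂inv.biUnion hR₁inv

theorem stmt_8 {X Y Z : Type*} [MetricSpace X] [MetricSpace Y] [MetricSpace Z]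
    [Nonempty X] [Nonempty Y] [Nonempty Z] :
    dGHus X Z ≤ dGHus X Y + dGHus Y Z :=
  stmt_8_general
end

section
/- Let X and Y be nonempty compact metric spaces. Then d^{us}_GH(X,Y) = d_GH(X,Y). -/
open Metric Set
open scoped ENNReal

/-! Closing a correspondence does not change its distortion, since the distortion of a pair of
points depends continuously on them. A closed relation between compact spaces has upper
semicontinuous set-valued maps in both directions, because projections along a compact factor
are closed maps. So the infimum defining `dGH` may be restricted to closed correspondences. -/

section Distortion

variable {X Y : Type*} [MetricSpace X] [MetricSpace Y]

lemma dis_closure (σ : Set (X × Y)) : dis (closure σ) = dis σ := by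
  refine le_antisymm (iSup₂_le fun p hp => iSup₂_le fun q hq => ?_) (dis_mono subset_closure)
  have hclosed : IsClosed {r : (X × Y) × (X × Y) |
      ENNReal.ofReal |dist r.1.1 r.2.1 - dist r.1.2 r.2.2| ≤ dis σ} :=
    isClosed_le (ENNReal.continuous_ofReal.comp (by fun_prop)) continuous_const
  have hsub : closure σ ×ˢ closure σ ⊆ {r : (X × Y) × (X × Y) |
      ENNReal.ofReal |dist r.1.1 r.2.1 - dist r.1.2 r.2.2| ≤ dis σ} := by
    rw [← closure_prod_eq]
    exact closure_minimal (fun r hr => ofReal_abs_dist_sub_dist_le_dis hr.1 hr.2) hclosed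
  exact hsub (mk_mem_prod hp hq)

end Distortion

lemma IsCorrespondence.closure {X Y : Type*} [TopologicalSpace X] [TopologicalSpace Y]
    {R : Set (X × Y)} (hR : IsCorrespondence R) : IsCorrespondence (closure R) :=
  ⟨fun x => (hR.1 x).imp fun _ h => subset_closure h,
    fun y => (hR.2 y).imp fun _ h => subset_closure h⟩

section Semicontinuity

variable {X Y : Type*} [TopologicalSpace X] [TopologicalSpace Y] {R : Set (X × Y)}

lemma svUpperSemicontinuous_corrMap_of_isClosed [CompactSpace Y] (hR : IsClosed R) :
    SVUpperSemicontinuous (corrMap R) := by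
  intro x U hU hxU
  set B := Prod.fst '' (R ∩ univ ×ˢ Uᶜ)
  have hB : IsClosed B :=
    isClosedMap_fst_of_compactSpace _ (hR.inter (isClosed_univ.prod hU.isClosed_compl))
  refine ⟨Bᶜ, hB.isOpen_compl, ?_, fun x' hx' y hy => ?_⟩
  · rintro ⟨⟨_, y⟩, ⟨hy, -, hyU⟩, rfl⟩
    exact hyU (hxU hy)
  · by_contra hyU
    exact hx' ⟨(x', y), ⟨hy, mem_univ _, hyU⟩, rfl⟩

lemma svUpperSemicontinuous_corrInv_of_isClosed [CompactSpace X] (hR : IsClosed R) :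
    SVUpperSemicontinuous (corrInv R) :=
  svUpperSemicontinuous_corrMap_of_isClosed (R := Prod.swap ⁻¹' R)
    (hR.preimage continuous_swap)

end Semicontinuity

theorem stmt_15_general {X Y : Type*} [MetricSpace X] [MetricSpace Y]
    [CompactSpace X] [CompactSpace Y] :
    dGHus X Y = dGH X Y := by
  unfold dGHus dGH
  congr 1
  refine le_antisymm (le_iInf₂ fun R hR => ?_) (le_iInf₂ fun R hR => iInf₂_le R hR.1)
  have hclosure : IsCorrespondence (closure R) ∧ SVUpperSemicontinuous (corrMap (closure R)) ∧
      SVUpperSemicontinuous (corrInv (closure R)) :=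
    ⟨hR.closure, svUpperSemicontinuous_corrMap_of_isClosed isClosed_closure,
      svUpperSemicontinuous_corrInv_of_isClosed isClosed_closure⟩
  calc _ ≤ dis (closure R) := iInf₂_le (closure R) hclosure
    _ = dis R := dis_closure R

theorem stmt_15 {X Y : Type*} [MetricSpace X] [MetricSpace Y]
    [CompactSpace X] [CompactSpace Y] [Nonempty X] [Nonempty Y] :
    dGHus X Y = dGH X Y :=
  stmt_15_general
end

section
/- Let X be a compact metric space and Y ⊆ X a nonempty subset with the induced metric. Then d^{us}_GH(X,Y) = d_GH(X,Y). -/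
open Metric Set
open scoped ENNReal

/-! A correspondence can be coarsened along a finite `δ`-net `t` of `X`: relate every point of
`closedBall s δ`, `s ∈ t`, to every point of the closure of the `R`-image of that ball. The result
is a finite union of products of closed sets, which makes both of its set-valued maps upper
semicontinuous, and it moves each pair by at most `2δ` in `X` and `δ` in `Y` from a pair of `R`,
so the distortion grows by at most `6δ`. Total boundedness of `X` supplies the nets. -/

section Distortion

variable {X Y : Type*} [MetricSpace X] [MetricSpace Y]

lemma ofReal_le_dis {R : Set (X × Y)} {p q : X × Y} (hp : p ∈ R) (hq : q ∈ R) :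
    ENNReal.ofReal |dist p.1 q.1 - dist p.2 q.2| ≤ dis R :=
  le_iSup₂_of_le p hp (le_iSup₂_of_le q hq le_rfl)

lemma dis_le_dis_add_of_forall_exists_close {R R' : Set (X × Y)} {a b : ℝ}
    (hclose : ∀ p ∈ R', ∃ q ∈ R, dist p.1 q.1 ≤ a ∧ dist p.2 q.2 ≤ b) :
    dis R' ≤ dis R + ENNReal.ofReal (2 * (a + b)) := by
  refine iSup₂_le fun p hp => iSup₂_le fun p' hp' => ?_
  obtain ⟨q, hq, hq₁, hq₂⟩ := hclose p hp
  obtain ⟨q', hq', hq'₁, hq'₂⟩ := hclose p' hp'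
  have h₁ := abs_le.mp (dist_dist_dist_le p.1 p'.1 q.1 q'.1)
  have h₂ := abs_le.mp (dist_dist_dist_le p.2 p'.2 q.2 q'.2)
  have hstep : |dist p.1 p'.1 - dist p.2 p'.2| ≤
      |dist q.1 q'.1 - dist q.2 q'.2| + 2 * (a + b) :=
    abs_le.mpr ⟨by linarith [neg_abs_le (dist q.1 q'.1 - dist q.2 q'.2)],
      by linarith [le_abs_self (dist q.1 q'.1 - dist q.2 q'.2)]⟩
  calc ENNReal.ofReal |dist p.1 p'.1 - dist p.2 p'.2|
      ≤ ENNReal.ofReal (|dist q.1 q'.1 - dist q.2 q'.2| + 2 * (a + b)) :=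
        ENNReal.ofReal_le_ofReal hstep
    _ ≤ ENNReal.ofReal |dist q.1 q'.1 - dist q.2 q'.2| + ENNReal.ofReal (2 * (a + b)) :=
        ENNReal.ofReal_add_le
    _ ≤ dis R + ENNReal.ofReal (2 * (a + b)) := by gcongr; exact ofReal_le_dis hq hq'

end Distortion

section Semicontinuity

variable {X Y ι : Type*} [TopologicalSpace X] [TopologicalSpace Y]

lemma svUpperSemicontinuous_of_locally_subset {f : X → Set Y}
    (hf : ∀ x, ∃ V : Set X, IsOpen V ∧ x ∈ V ∧ ∀ x' ∈ V, f x' ⊆ f x) :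
    SVUpperSemicontinuous f := fun x _ _ hxU =>
  let ⟨V, hV, hxV, hsub⟩ := hf x
  ⟨V, hV, hxV, fun x' hx' => (hsub x' hx').trans hxU⟩

lemma svUpperSemicontinuous_corrMap_biUnion_prod {t : Set ι} (ht : t.Finite)
    {C : ι → Set X} {D : ι → Set Y} (hC : ∀ i ∈ t, IsClosed (C i)) :
    SVUpperSemicontinuous (corrMap (⋃ i ∈ t, C i ×ˢ D i)) := by
  refine svUpperSemicontinuous_of_locally_subset fun x => ?_
  refine ⟨⋂ i ∈ {i ∈ t | x ∉ C i}, (C i)ᶜ,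
    (ht.subset (sep_subset _ _)).isOpen_biInter fun i hi => (hC i hi.1).isOpen_compl,
    mem_iInter₂.mpr fun i hi => hi.2, fun x' hx' y hy => ?_⟩
  obtain ⟨i, hx'C, hi, hyD⟩ : ∃ i, x' ∈ C i ∧ i ∈ t ∧ y ∈ D i := by simpa [corrMap] using hy
  have hxC : x ∈ C i := by_contra fun hxC => mem_iInter₂.mp hx' i ⟨hi, hxC⟩ hx'C
  simpa [corrMap] using ⟨i, hxC, hi, hyD⟩

lemma svUpperSemicontinuous_corrInv_biUnion_prod {t : Set ι} (ht : t.Finite)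
    {C : ι → Set X} {D : ι → Set Y} (hD : ∀ i ∈ t, IsClosed (D i)) :
    SVUpperSemicontinuous (corrInv (⋃ i ∈ t, C i ×ˢ D i)) := by
  have hswap : corrInv (⋃ i ∈ t, C i ×ˢ D i) = corrMap (⋃ i ∈ t, D i ×ˢ C i) := by
    ext y x
    simp [corrInv, corrMap, and_comm]
  rw [hswap]
  exact svUpperSemicontinuous_corrMap_biUnion_prod ht hD

end Semicontinuity

section Coarsening

variable {X Y : Type*} [MetricSpace X] [MetricSpace Y]

def netCoarsening (R : Set (X × Y)) (t : Set X) (δ : ℝ) : Set (X × Y) :=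
  ⋃ s ∈ t, closedBall s δ ×ˢ closure (⋃ x ∈ closedBall s δ, corrMap R x)

lemma mem_netCoarsening {R : Set (X × Y)} {t : Set X} {δ : ℝ} {x : X} {y : Y} :
    (x, y) ∈ netCoarsening R t δ ↔
      ∃ s ∈ t, dist x s ≤ δ ∧ y ∈ closure (⋃ x' ∈ closedBall s δ, corrMap R x') := by
  simp only [netCoarsening, mem_iUnion, mem_prod, exists_prop]
  exact exists_congr fun s => and_congr_right' (and_congr_left' mem_closedBall)

lemma isCorrespondence_netCoarsening {R : Set (X × Y)} (hR : IsCorrespondence R) {t : Set X}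
    {δ : ℝ} (hnet : ∀ x, ∃ s ∈ t, dist x s ≤ δ) : IsCorrespondence (netCoarsening R t δ) := by
  refine ⟨fun x => ?_, fun y => ?_⟩
  · obtain ⟨s, hst, hxs⟩ := hnet x
    obtain ⟨y, hy⟩ := hR.1 s
    have hs : s ∈ closedBall s δ := mem_closedBall_self (dist_nonneg.trans hxs)
    exact ⟨y, mem_netCoarsening.mpr ⟨s, hst, hxs, subset_closure (mem_biUnion hs hy)⟩⟩
  · obtain ⟨x, hx⟩ := hR.2 y
    obtain ⟨s, hst, hxs⟩ := hnet x
    exact ⟨x, mem_netCoarsening.mpr ⟨s, hst, hxs, subset_closure (mem_biUnion hxs hx)⟩⟩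

lemma exists_close_of_mem_netCoarsening {R : Set (X × Y)} {t : Set X} {δ : ℝ} (hδ : 0 < δ)
    {p : X × Y} (hp : p ∈ netCoarsening R t δ) :
    ∃ q ∈ R, dist p.1 q.1 ≤ 2 * δ ∧ dist p.2 q.2 ≤ δ := by
  obtain ⟨s, -, hps, hpy⟩ := mem_netCoarsening.mp hp
  obtain ⟨y, hy, hpy⟩ := mem_closure_iff.mp hpy δ hδ
  obtain ⟨x, hxs, hxy⟩ := mem_iUnion₂.mp hy
  refine ⟨(x, y), hxy, ?_, hpy.le⟩
  calc dist p.1 x ≤ dist p.1 s + dist x s := dist_triangle_right _ _ _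
    _ ≤ 2 * δ := by linarith [mem_closedBall.mp hxs]

lemma dis_netCoarsening_le (R : Set (X × Y)) (t : Set X) {δ : ℝ} (hδ : 0 < δ) :
    dis (netCoarsening R t δ) ≤ dis R + ENNReal.ofReal (6 * δ) := by
  calc dis (netCoarsening R t δ) ≤ dis R + ENNReal.ofReal (2 * (2 * δ + δ)) :=
        dis_le_dis_add_of_forall_exists_close fun _ hp => exists_close_of_mem_netCoarsening hδ hp
    _ = dis R + ENNReal.ofReal (6 * δ) := by ring_nf

lemma svUpperSemicontinuous_corrMap_netCoarsening (R : Set (X × Y)) {t : Set X} (ht : t.Finite)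
    (δ : ℝ) : SVUpperSemicontinuous (corrMap (netCoarsening R t δ)) :=
  svUpperSemicontinuous_corrMap_biUnion_prod ht fun _ _ => isClosed_closedBall

lemma svUpperSemicontinuous_corrInv_netCoarsening (R : Set (X × Y)) {t : Set X} (ht : t.Finite)
    (δ : ℝ) : SVUpperSemicontinuous (corrInv (netCoarsening R t δ)) :=
  svUpperSemicontinuous_corrInv_biUnion_prod ht fun _ _ => isClosed_closure

lemma exists_svUpperSemicontinuous_correspondence_dis_le (hX : TotallyBounded (univ : Set X))
    {R : Set (X × Y)} (hR : IsCorrespondence R) {ε : ℝ} (hε : 0 < ε) :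
    ∃ R' : Set (X × Y), IsCorrespondence R' ∧ SVUpperSemicontinuous (corrMap R') ∧
      SVUpperSemicontinuous (corrInv R') ∧ dis R' ≤ dis R + ENNReal.ofReal ε := by
  obtain ⟨t, ht, hcover⟩ := totallyBounded_iff.mp hX (ε / 6) (by positivity)
  have hnet : ∀ x, ∃ s ∈ t, dist x s ≤ ε / 6 := fun x => by
    obtain ⟨s, hst, hxs⟩ := mem_iUnion₂.mp (hcover (mem_univ x))
    exact ⟨s, hst, (mem_ball.mp hxs).le⟩
  refine ⟨netCoarsening R t (ε / 6), isCorrespondence_netCoarsening hR hnet,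
    svUpperSemicontinuous_corrMap_netCoarsening R ht _,
    svUpperSemicontinuous_corrInv_netCoarsening R ht _, ?_⟩
  have h := dis_netCoarsening_le R t (δ := ε / 6) (by positivity)
  rwa [mul_div_cancel₀ ε (by norm_num : (6 : ℝ) ≠ 0)] at h

end Coarsening

theorem dGHus_eq_dGH_of_totallyBounded {X Y : Type*} [MetricSpace X] [MetricSpace Y]
    (hX : TotallyBounded (univ : Set X)) : dGHus X Y = dGH X Y := by
  refine congrArg (2⁻¹ * ·) (le_antisymm ?_ ?_)
  · refine le_iInf₂ fun R hR => ENNReal.le_of_forall_pos_le_add fun ε hε _ => ?_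
    obtain ⟨R', hR', hmap, hinv, hdis⟩ :=
      exists_svUpperSemicontinuous_correspondence_dis_le hX hR (NNReal.coe_pos.mpr hε)
    exact (iInf₂_le R' ⟨hR', hmap, hinv⟩).trans (by simpa using hdis)
  · exact le_iInf₂ fun R hR => iInf₂_le R hR.1

theorem stmt_16_general {X : Type*} [MetricSpace X] [CompactSpace X]
    (Y : Set X) :
    dGHus X Y = dGH X Y :=
  dGHus_eq_dGH_of_totallyBounded isCompact_univ.totallyBounded

theorem stmt_16 {X : Type*} [MetricSpace X] [CompactSpace X]
    (Y : Set X) (hY : Y.Nonempty) :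
    dGHus X Y = dGH X Y :=
  stmt_16_general Y
end

section
/- Let X be a nonempty compact metric space and Y ⊆ X a dense subset with the induced metric. Then d^{us}_GH(X,Y) = 0. -/
open Metric Set
open scoped ENNReal

/-! Cover `X` by finitely many `δ`-balls centred at points of a finite set `t ⊆ Y` and relate two
points when they share a nearest point of `t`. Because `t` is finite, a point of `t` that is not
nearest to `z` stays not nearest near `z`, so the sets of nearest points only shrink locally; this
makes both set-valued maps of the relation upper semicontinuous. Related points lie within `2δ`
of each other, so the distortion is at most `4δ`. -/

open Filter Topology

theorem svUpperSemicontinuous_of_eventually_subset {X Y : Type*} [TopologicalSpace X]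
    [TopologicalSpace Y] {f : X → Set Y} (hf : ∀ x, ∀ᶠ x' in 𝓝 x, f x' ⊆ f x) :
    SVUpperSemicontinuous f := by
  intro x U _ hxU
  obtain ⟨V, hVf, hVo, hxV⟩ := eventually_nhds_iff.1 (hf x)
  exact ⟨V, hVo, hxV, fun x' hx' => (hVf x' hx').trans hxU⟩

theorem dis_le_of_forall_dist_le {X Y : Type*} [MetricSpace X] [MetricSpace Y] {φ : Y → X}
    (hφ : Isometry φ) {R : Set (X × Y)} {ε : ℝ} (hR : ∀ p ∈ R, dist p.1 (φ p.2) ≤ ε) :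
    dis R ≤ ENNReal.ofReal (2 * ε) := by
  refine iSup₂_le fun p hp => iSup₂_le fun q hq => ENNReal.ofReal_le_ofReal ?_
  rw [← hφ.dist_eq, ← Real.dist_eq]
  calc dist (dist p.1 q.1) (dist (φ p.2) (φ q.2))
      ≤ dist p.1 (φ p.2) + dist q.1 (φ q.2) := dist_dist_dist_le _ _ _ _
    _ ≤ 2 * ε := by linarith [hR p hp, hR q hq]

theorem Dense.exists_finite_subset_cover_balls {X : Type*} [PseudoMetricSpace X] [CompactSpace X]
    {Y : Set X} (hY : Dense Y) {δ : ℝ} (hδ : 0 < δ) :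
    ∃ t ⊆ Y, t.Finite ∧ univ ⊆ ⋃ s ∈ t, ball s δ :=
  isCompact_univ.elim_finite_subcover_image (fun _ _ => isOpen_ball)
    ((dense_iff_iUnion_ball Y).1 hY δ hδ).ge

section NearestPoints

variable {X : Type*} [PseudoMetricSpace X] {t : Set X}

def nearestPoints (t : Set X) (x : X) : Set X :=
  {s ∈ t | ∀ s' ∈ t, dist x s ≤ dist x s'}

theorem mem_nearestPoints_self {s : X} (hs : s ∈ t) : s ∈ nearestPoints t s :=
  ⟨hs, fun s' _ => by simp only [dist_self, dist_nonneg]⟩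

theorem Set.Finite.nearestPoints_nonempty (ht : t.Finite) (ht' : t.Nonempty) (x : X) :
    (nearestPoints t x).Nonempty :=
  t.exists_min_image (dist x) ht ht'

theorem Set.Finite.eventually_nearestPoints_subset (ht : t.Finite) (z : X) :
    ∀ᶠ z' in 𝓝 z, nearestPoints t z' ⊆ nearestPoints t z := by
  have hfar : ∀ s ∈ t \ nearestPoints t z, ∀ᶠ z' in 𝓝 z, s ∉ nearestPoints t z' := by
    rintro s ⟨hst, hsz⟩
    obtain ⟨s', hs't, hlt⟩ : ∃ s' ∈ t, dist z s' < dist z s := by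
      by_contra! h
      exact hsz ⟨hst, h⟩
    have hcont : ∀ a : X, Continuous fun z' => dist z' a := fun a =>
      continuous_id.dist continuous_const
    filter_upwards [(hcont s').continuousAt.eventually_lt (hcont s).continuousAt hlt]
      with z' hz' hsz'
    exact (hsz'.2 s' hs't).not_gt hz'
  filter_upwards [ht.sdiff.eventually_all.2 hfar] with z' hz' s hs
  by_contra hsz
  exact hz' s ⟨hs.1, hsz⟩ hs

theorem dist_lt_of_mem_nearestPoints {x s s' : X} {δ : ℝ} (hs : s ∈ nearestPoints t x)
    (hs' : s' ∈ t) (hδ : dist x s' < δ) : dist x s < δ :=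
  (hs.2 s' hs').trans_lt hδ

end NearestPoints

theorem Dense.exists_usc_correspondence_dis_le {X : Type*} [MetricSpace X] [CompactSpace X]
    {Y : Set X} (hY : Dense Y) {ε : ℝ} (hε : 0 < ε) :
    ∃ R : Set (X × Y), (IsCorrespondence R ∧ SVUpperSemicontinuous (corrMap R) ∧
      SVUpperSemicontinuous (corrInv R)) ∧ dis R ≤ ENNReal.ofReal ε := by
  obtain ⟨t, htY, htfin, hcover⟩ := hY.exists_finite_subset_cover_balls (by positivity : 0 < ε / 4)
  have hnet : ∀ x, ∃ s ∈ t, dist x s < ε / 4 := fun x => by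
    simpa only [mem_iUnion₂, mem_ball, exists_prop] using hcover (mem_univ x)
  have hne : ∀ x, (nearestPoints t x).Nonempty := fun x =>
    htfin.nearestPoints_nonempty ((hnet x).imp fun _ => And.left) x
  have hclose : ∀ x, ∀ s ∈ nearestPoints t x, dist x s < ε / 4 := fun x s hs =>
    let ⟨s', hs't, hs'⟩ := hnet x; dist_lt_of_mem_nearestPoints hs hs't hs'
  let R : Set (X × Y) := {p | (nearestPoints t p.1 ∩ nearestPoints t p.2).Nonempty}
  refine ⟨R, ⟨⟨fun x => ?_, fun y => ⟨y, ?_⟩⟩, ?_, ?_⟩, ?_⟩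
  · obtain ⟨s, hs⟩ := hne x
    exact ⟨⟨s, htY hs.1⟩, s, hs, mem_nearestPoints_self hs.1⟩
  · simpa only [mem_ofPred_eq, R, inter_self] using hne y
  · refine svUpperSemicontinuous_of_eventually_subset fun x => ?_
    filter_upwards [htfin.eventually_nearestPoints_subset x] with x' hx' y ⟨s, hsx', hsy⟩
    exact ⟨s, hx' hsx', hsy⟩
  · refine svUpperSemicontinuous_of_eventually_subset fun y => ?_
    filter_upwards [continuous_subtype_val.continuousAt.eventually
      (htfin.eventually_nearestPoints_subset (y : X))] with y' hy' x ⟨s, hsx, hsy'⟩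
    exact ⟨s, hsx, hy' hsy'⟩
  · have hR : ∀ p ∈ R, dist p.1 (p.2 : X) ≤ ε / 2 := by
      rintro ⟨x, y⟩ ⟨s, hsx, hsy⟩
      calc dist x (y : X) ≤ dist x s + dist (y : X) s := dist_triangle_right _ _ _
        _ ≤ ε / 2 := by linarith [hclose x s hsx, hclose y s hsy]
    calc dis R ≤ ENNReal.ofReal (2 * (ε / 2)) := dis_le_of_forall_dist_le isometry_subtype_coe hR
      _ = ENNReal.ofReal ε := by congr 1; ring

theorem stmt_17_general {X : Type*} [MetricSpace X] [CompactSpace X]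
    (Y : Set X) (hY : Dense Y) :
    dGHus X Y = 0 := by
  suffices h : (⨅ (R : Set (X × Y)) (_ : IsCorrespondence R ∧ SVUpperSemicontinuous (corrMap R) ∧
      SVUpperSemicontinuous (corrInv R)), dis R) = 0 by
    rw [dGHus, h, mul_zero]
  refine nonpos_iff_eq_zero.1 (ENNReal.le_of_forall_pos_le_add fun ε hε _ => ?_)
  obtain ⟨R, hR, hdis⟩ := hY.exists_usc_correspondence_dis_le (NNReal.coe_pos.2 hε)
  calc _ ≤ dis R := iInf₂_le R hR
    _ ≤ ε := hdis.trans_eq ENNReal.ofReal_coe_nnreal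
    _ = 0 + ε := (zero_add _).symm

theorem stmt_17 {X : Type*} [MetricSpace X] [CompactSpace X] [Nonempty X]
    (Y : Set X) (hY : Dense Y) :
    dGHus X Y = 0 :=
  stmt_17_general Y hY
end

section
/- Let X and Y be nonempty totally bounded metric spaces. Then d^{us}_GH(X,Y) = d_GH(X,Y). -/
open Metric Set
open scoped ENNReal

/-!
Every correspondence `R` between totally bounded spaces can be replaced, at the cost of an
arbitrarily small increase of distortion, by an upper semicontinuous one: choose a finite
`δ`-net `F ⊆ R` whose projections are `δ`-nets of `X` and `Y`, and take the union of the
products of closed `δ`-balls around the points of `F`. A finite union of products with closed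
factors is upper semicontinuous in both directions, and every pair in it is `δ`-close to a pair
of `R`, which changes distortion by at most `4δ`.
-/

lemma corrInv_biUnion_prod {X Y ι : Type*} (F : Set ι) (A : ι → Set X) (B : ι → Set Y) :
    corrInv (⋃ i ∈ F, A i ×ˢ B i) = corrMap (⋃ i ∈ F, B i ×ˢ A i) := by
  ext y x
  simp only [corrInv, corrMap, mem_iUnion, mem_prod, exists_prop]
  grind

lemma svUpperSemicontinuous_corrMap_biUnion_prod_s18 {X Y ι : Type*} [TopologicalSpace X]
    [TopologicalSpace Y] {F : Set ι} (hF : F.Finite) (A : ι → Set X) (B : ι → Set Y)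
    (hA : ∀ i ∈ F, IsClosed (A i)) :
    SVUpperSemicontinuous (corrMap (⋃ i ∈ F, A i ×ˢ B i)) := by
  intro x U _ hxU
  -- Near `x` only the pieces whose closed first factor contains `x` contribute.
  refine ⟨(⋃ i ∈ {i ∈ F | x ∉ A i}, A i)ᶜ, ?_, ?_, ?_⟩
  · exact (hF.subset (sep_subset _ _)).isClosed_biUnion (fun i hi => hA i hi.1) |>.isOpen_compl
  · simp only [mem_compl_iff, mem_iUnion, not_exists]
    exact fun i hi => hi.2
  · intro x' hx' y hy
    obtain ⟨i, hiF, hx'i, hyi⟩ := mem_iUnion₂.1 hy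
    have hxi : x ∈ A i := by
      by_contra hxi
      exact hx' (mem_biUnion ⟨hiF, hxi⟩ hx'i)
    exact hxU (mem_biUnion hiF ⟨hxi, hyi⟩)

section MetricCorrespondence

variable {X Y : Type*} [MetricSpace X] [MetricSpace Y]

lemma abs_dist_sub_dist_le_of_close {x x' u u' : X} {y y' v v' : Y} {δ : ℝ}
    (hx : dist x u ≤ δ) (hx' : dist x' u' ≤ δ) (hy : dist y v ≤ δ) (hy' : dist y' v' ≤ δ) :
    |dist x x' - dist y y'| ≤ |dist u u' - dist v v'| + 4 * δ := by
  have hX : |dist x x' - dist u u'| ≤ dist x u + dist x' u' := dist_dist_dist_le x x' u u'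
  have hY : |dist y y' - dist v v'| ≤ dist y v + dist y' v' := dist_dist_dist_le y y' v v'
  rw [abs_le] at hX hY
  have := neg_abs_le (dist u u' - dist v v')
  have := le_abs_self (dist u u' - dist v v')
  exact abs_le.2 ⟨by linarith, by linarith⟩

lemma dis_le_dis_add_of_forall_close {R R' : Set (X × Y)} {δ : ℝ}
    (hclose : ∀ p ∈ R', ∃ r ∈ R, dist p.1 r.1 ≤ δ ∧ dist p.2 r.2 ≤ δ) :
    dis R' ≤ dis R + ENNReal.ofReal (4 * δ) := by
  refine iSup₂_le fun p hp => iSup₂_le fun q hq => ?_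
  obtain ⟨r, hr, hpr₁, hpr₂⟩ := hclose p hp
  obtain ⟨r', hr', hqr₁, hqr₂⟩ := hclose q hq
  calc ENNReal.ofReal |dist p.1 q.1 - dist p.2 q.2|
      ≤ ENNReal.ofReal (|dist r.1 r'.1 - dist r.2 r'.2| + 4 * δ) :=
        ENNReal.ofReal_le_ofReal (abs_dist_sub_dist_le_of_close hpr₁ hqr₁ hpr₂ hqr₂)
    _ ≤ ENNReal.ofReal |dist r.1 r'.1 - dist r.2 r'.2| + ENNReal.ofReal (4 * δ) :=
        ENNReal.ofReal_add_le
    _ ≤ dis R + ENNReal.ofReal (4 * δ) := by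
        gcongr
        exact le_iSup₂_of_le r hr (le_iSup₂_of_le r' hr' le_rfl)

lemma IsCorrespondence.exists_finite_subset_nets {R : Set (X × Y)} (hR : IsCorrespondence R)
    (hX : TotallyBounded (univ : Set X)) (hY : TotallyBounded (univ : Set Y))
    {δ : ℝ} (hδ : 0 < δ) :
    ∃ F ⊆ R, F.Finite ∧ (∀ x, ∃ p ∈ F, dist x p.1 ≤ δ) ∧ (∀ y, ∃ p ∈ F, dist y p.2 ≤ δ) := by
  obtain ⟨s, hs, hsX⟩ := totallyBounded_iff.1 hX δ hδ
  obtain ⟨t, ht, htY⟩ := totallyBounded_iff.1 hY δ hδ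
  choose φ hφ using hR.1
  choose ψ hψ using hR.2
  refine ⟨(fun a => (a, φ a)) '' s ∪ (fun b => (ψ b, b)) '' t, ?_, (hs.image _).union (ht.image _),
    fun x => ?_, fun y => ?_⟩
  · rintro _ (⟨a, -, rfl⟩ | ⟨b, -, rfl⟩)
    exacts [hφ a, hψ b]
  · obtain ⟨a, ha, hxa⟩ := mem_iUnion₂.1 (hsX (mem_univ x))
    exact ⟨(a, φ a), .inl (mem_image_of_mem _ ha), (mem_ball.1 hxa).le⟩
  · obtain ⟨b, hb, hyb⟩ := mem_iUnion₂.1 (htY (mem_univ y))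
    exact ⟨(ψ b, b), .inr (mem_image_of_mem _ hb), (mem_ball.1 hyb).le⟩

lemma IsCorrespondence.exists_usc_dis_le {R : Set (X × Y)} (hR : IsCorrespondence R)
    (hX : TotallyBounded (univ : Set X)) (hY : TotallyBounded (univ : Set Y))
    {δ : ℝ} (hδ : 0 < δ) :
    ∃ R' : Set (X × Y), (IsCorrespondence R' ∧ SVUpperSemicontinuous (corrMap R') ∧
      SVUpperSemicontinuous (corrInv R')) ∧ dis R' ≤ dis R + ENNReal.ofReal (4 * δ) := by
  obtain ⟨F, hFR, hF, hFX, hFY⟩ := hR.exists_finite_subset_nets hX hY hδ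
  have hclosed₁ : ∀ p ∈ F, IsClosed (closedBall p.1 δ) := fun _ _ => isClosed_closedBall
  have hclosed₂ : ∀ p ∈ F, IsClosed (closedBall p.2 δ) := fun _ _ => isClosed_closedBall
  refine ⟨⋃ p ∈ F, closedBall p.1 δ ×ˢ closedBall p.2 δ, ⟨⟨fun x => ?_, fun y => ?_⟩,
    svUpperSemicontinuous_corrMap_biUnion_prod_s18 hF _ _ hclosed₁, ?_⟩,
    dis_le_dis_add_of_forall_close ?_⟩
  · obtain ⟨p, hp, hxp⟩ := hFX x
    exact ⟨p.2, mem_biUnion hp ⟨hxp, mem_closedBall_self hδ.le⟩⟩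
  · obtain ⟨p, hp, hyp⟩ := hFY y
    exact ⟨p.1, mem_biUnion hp ⟨mem_closedBall_self hδ.le, hyp⟩⟩
  · rw [corrInv_biUnion_prod]
    exact svUpperSemicontinuous_corrMap_biUnion_prod_s18 hF _ _ hclosed₂
  · intro q hq
    obtain ⟨p, hp, hq₁, hq₂⟩ := mem_iUnion₂.1 hq
    exact ⟨p, hFR hp, hq₁, hq₂⟩

end MetricCorrespondence

theorem stmt_18_general {X Y : Type*} [MetricSpace X] [MetricSpace Y]
    (hX : TotallyBounded (Set.univ : Set X)) (hY : TotallyBounded (Set.univ : Set Y)) :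
    dGHus X Y = dGH X Y := by
  unfold dGHus dGH
  refine le_antisymm ?_ ?_ <;> gcongr 2⁻¹ * ?_
  · refine le_iInf₂ fun R hR => ENNReal.le_of_forall_pos_le_add fun ε hε _ => ?_
    obtain ⟨R', hR', hdis⟩ := hR.exists_usc_dis_le hX hY (div_pos (NNReal.coe_pos.2 hε) four_pos)
    rw [mul_div_cancel₀ _ four_ne_zero, ENNReal.ofReal_coe_nnreal] at hdis
    exact iInf₂_le_of_le R' hR' hdis
  · exact le_iInf₂ fun R hR => iInf₂_le R hR.1

theorem stmt_18 {X Y : Type*} [MetricSpace X] [MetricSpace Y] [Nonempty X] [Nonempty Y]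
    (hX : TotallyBounded (Set.univ : Set X)) (hY : TotallyBounded (Set.univ : Set Y)) :
    dGHus X Y = dGH X Y :=
  stmt_18_general hX hY
end

section
/- Let X and Y be nonempty boundedly compact metric spaces (every closed ball is compact) with d_GH(X,Y) < ∞. Then d^{us}_GH(X,Y) = d_GH(X,Y). -/
/-!
A correspondence `R` of finite distortion can be replaced by its closure, which has the same
distortion since distortion is a continuous function of the pair of points. A closed relation
of finite distortion between boundedly compact spaces has locally uniformly bounded fibres (the
fibre over `x'` lies within `dist x' x + dis R` of the fibre over `x`), so by the tube lemma it
and its inverse are upper semicontinuous.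
-/

open Metric Set
open scoped ENNReal

section Distortion

variable {X Y : Type*} [MetricSpace X] [MetricSpace Y]

lemma dis_le_iff {σ : Set (X × Y)} {c : ℝ≥0∞} :
    dis σ ≤ c ↔ ∀ p ∈ σ, ∀ q ∈ σ, ENNReal.ofReal |dist p.1 q.1 - dist p.2 q.2| ≤ c := by
  simp only [dis, iSup_le_iff]

lemma abs_dist_sub_dist_le_toReal_dis {σ : Set (X × Y)} (hσ : dis σ ≠ ⊤) {p q : X × Y}
    (hp : p ∈ σ) (hq : q ∈ σ) : |dist p.1 q.1 - dist p.2 q.2| ≤ (dis σ).toReal :=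
  (ENNReal.ofReal_le_iff_le_toReal hσ).1 (dis_le_iff.1 le_rfl p hp q hq)

lemma dis_preimage_swap (σ : Set (X × Y)) : dis (Prod.swap ⁻¹' σ) = dis σ := by
  refine le_antisymm ?_ ?_ <;> refine dis_le_iff.2 fun p hp q hq => ?_ <;>
    rw [abs_sub_comm] <;> exact dis_le_iff.1 le_rfl p.swap hp q.swap hq

end Distortion

section Semicontinuity

open Filter Topology

variable {X Y : Type*} [TopologicalSpace X] [TopologicalSpace Y]

lemma svUpperSemicontinuous_iff_eventually {f : X → Set Y} :
    SVUpperSemicontinuous f ↔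
      ∀ x U, IsOpen U → f x ⊆ U → ∀ᶠ x' in 𝓝 x, f x' ⊆ U := by
  simp only [SVUpperSemicontinuous, _root_.eventually_nhds_iff]
  exact forall₄_congr fun _ _ _ _ => exists_congr fun _ => by tauto

lemma svUpperSemicontinuous_corrMap_of_isClosed_s19 {C : Set (X × Y)} (hC : IsClosed C)
    (hloc : ∀ x, ∃ K, IsCompact K ∧ ∀ᶠ x' in 𝓝 x, corrMap C x' ⊆ K) :
    SVUpperSemicontinuous (corrMap C) := by
  refine svUpperSemicontinuous_iff_eventually.2 fun x U hU hxU => ?_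
  obtain ⟨K, hK, hxK⟩ := hloc x
  have htube : ∀ᶠ x' in 𝓝 x, ∀ y ∈ K, (x', y) ∈ C → y ∈ U := by
    refine hK.eventually_forall_of_forall_eventually fun y _ => ?_
    by_cases hy : y ∈ U
    · have hU' : ∀ᶠ z : X × Y in 𝓝 (x, y), z.2 ∈ U :=
        (continuous_snd.isOpen_preimage U hU).mem_nhds hy
      exact hU'.mono fun _ h _ => h
    · have hC' : ∀ᶠ z : X × Y in 𝓝 (x, y), z ∉ C :=
        hC.isOpen_compl.mem_nhds fun h => hy (hxU h)
      exact hC'.mono fun _ h h' => absurd h' h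
  filter_upwards [hxK, htube] with x' hK' htube' y hy
  exact htube' y (hK' hy) hy

end Semicontinuity

section Proper

variable {X Y : Type*} [MetricSpace X] [MetricSpace Y]

lemma svUpperSemicontinuous_corrMap_of_dis_ne_top [ProperSpace Y] {C : Set (X × Y)}
    (hC : IsClosed C) (hdom : ∀ x, ∃ y, (x, y) ∈ C) (hdis : dis C ≠ ⊤) :
    SVUpperSemicontinuous (corrMap C) := by
  refine svUpperSemicontinuous_corrMap_of_isClosed_s19 hC fun x => ?_
  obtain ⟨y, hxy⟩ := hdom x
  refine ⟨closedBall y (1 + (dis C).toReal), isCompact_closedBall _ _, ?_⟩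
  filter_upwards [ball_mem_nhds x one_pos] with x' hx' y' hy'
  have hbound := abs_le.1 (abs_dist_sub_dist_le_toReal_dis hdis hy' hxy)
  rw [mem_closedBall]
  linarith [hbound.2, mem_ball.1 hx']

lemma svUpperSemicontinuous_corrInv_of_dis_ne_top [ProperSpace X] {C : Set (X × Y)}
    (hC : IsClosed C) (hcod : ∀ y, ∃ x, (x, y) ∈ C) (hdis : dis C ≠ ⊤) :
    SVUpperSemicontinuous (corrInv C) :=
  svUpperSemicontinuous_corrMap_of_dis_ne_top (hC.preimage continuous_swap) hcod
    ((dis_preimage_swap C).trans_ne hdis)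

end Proper

theorem stmt_19_general {X Y : Type*} [MetricSpace X] [MetricSpace Y]
    (hX : ∀ (x : X) (r : ℝ), IsCompact (Metric.closedBall x r))
    (hY : ∀ (y : Y) (r : ℝ), IsCompact (Metric.closedBall y r)) :
    dGHus X Y = dGH X Y := by
  have : ProperSpace X := ⟨hX⟩
  have : ProperSpace Y := ⟨hY⟩
  refine le_antisymm ?_ (mul_le_mul_right (le_iInf₂ fun R hR => iInf₂_le R hR.1) _)
  refine mul_le_mul_right (le_iInf₂ fun R hR => ?_) _
  rcases eq_or_ne (dis R) ⊤ with hRtop | hRtop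
  · exact hRtop ▸ le_top
  have hdis : dis (closure R) ≠ ⊤ := (dis_closure R).trans_ne hRtop
  have hcorr := hR.closure
  rw [← dis_closure R]
  exact iInf₂_le _ ⟨hcorr,
    svUpperSemicontinuous_corrMap_of_dis_ne_top isClosed_closure hcorr.1 hdis,
    svUpperSemicontinuous_corrInv_of_dis_ne_top isClosed_closure hcorr.2 hdis⟩

theorem stmt_19 {X Y : Type*} [MetricSpace X] [MetricSpace Y] [Nonempty X] [Nonempty Y]
    (hX : ∀ (x : X) (r : ℝ), IsCompact (Metric.closedBall x r))
    (hY : ∀ (y : Y) (r : ℝ), IsCompact (Metric.closedBall y r))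
    (hfin : dGH X Y < ⊤) :
    dGHus X Y = dGH X Y :=
  stmt_19_general hX hY
end
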